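/- Let f_w be an l-layer GCN (l ≥ 2) with nonzero weight matrices W_1,…,W_l, and let ΔW_1,…,ΔW_l be perturbation matrices of matching sizes with ‖ΔW_i‖₂ ≤ ‖W_i‖₂ / l for all i ∈ [l]. Then for any graph G = (X, A) on n nodes with ‖X‖₂ ≤ B and any pair of classes i, j ∈ [K]: |M(f_{w+Δw}(G), i, j) − M(f_w(G), i, j)| ≤ 2e · B · (∏_{i=1}^l ‖W_i‖₂) · Σ_{i=1}^l (‖ΔW_i‖₂ / ‖W_i‖₂). -/

import Mathlib

open MeasureTheory Matrix Finset

noncomputable section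

/-- Spectral norm of a real matrix: the operator norm induced by Euclidean vector norms. -/
def specNorm {m n : Type*} [Fintype m] [Fintype n] [DecidableEq n] (A : Matrix m n ℝ) : ℝ :=
  ‖LinearMap.toContinuousLinearMap (Matrix.toEuclideanLin A)‖

/-- Frobenius norm of a real matrix. -/
def frobNorm {m n : Type*} [Fintype m] [Fintype n] (A : Matrix m n ℝ) : ℝ :=
  Real.sqrt (∑ i, ∑ j, (A i j) ^ 2)

/-- Euclidean norm of a finite real vector. -/
def euclNorm {n : Type*} [Fintype n] (v : n → ℝ) : ℝ :=
  Real.sqrt (∑ i, (v i) ^ 2)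

/-- Entrywise ReLU on a matrix. -/
def relu {m k : Type*} (M : Matrix m k ℝ) : Matrix m k ℝ := M.map (fun x => max x 0)

/-- Node representations of a GCN: `H_0 = X`, `H_{k+1} = σ(P H_k W_{k+1})`
(we index weights from `0`, so `W k` is the paper's `W_{k+1}`). -/
def gcnRep {n : ℕ} (d : ℕ → ℕ) (W : ∀ k : ℕ, Matrix (Fin (d k)) (Fin (d (k + 1))) ℝ)
    (P : Matrix (Fin n) (Fin n) ℝ) (X : Matrix (Fin n) (Fin (d 0)) ℝ) :
    (k : ℕ) → Matrix (Fin n) (Fin (d k)) ℝ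
  | 0 => X
  | (k + 1) => relu (P * gcnRep d W P X k * W k)

/-- Output (readout) of an `l`-layer GCN: `f_w(G) = H_l = (1/n) 1_n H_{l-1} W_l`. -/
def gcnOut {n : ℕ} (d : ℕ → ℕ) (W : ∀ k : ℕ, Matrix (Fin (d k)) (Fin (d (k + 1))) ℝ)
    (P : Matrix (Fin n) (Fin n) ℝ) (X : Matrix (Fin n) (Fin (d 0)) ℝ) :
    (l : ℕ) → Fin (d l) → ℝ
  | 0 => fun _ => 0
  | (l + 1) => fun j => (n : ℝ)⁻¹ * ∑ i, (gcnRep d W P X l * W l) i j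

/-- Normalized graph Laplacian `P_G = D̃^{-1/2} Ã D̃^{-1/2}` with `Ã = A + I` and
`D̃ = diag(∑_j Ã_{ij})`, written entrywise. -/
def gcnLap {n : ℕ} (A : Matrix (Fin n) (Fin n) ℝ) : Matrix (Fin n) (Fin n) ℝ :=
  Matrix.of fun i j =>
    (A + 1) i j / (Real.sqrt (∑ k, (A + 1) i k) * Real.sqrt (∑ k, (A + 1) j k))

/-! Compare the two networks layer by layer in the Frobenius norm, for which the ReLU is
1-Lipschitz; spectral norms enter through `‖A B‖_F ≤ ‖A‖_F ‖B‖₂` and `‖P_G‖₂ ≤ 1`, the latter by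
Cauchy–Schwarz and the symmetry of `Ã`. Splitting `H'W' - HW = (H' - H) W' + H ΔW` and using
`‖W'ₖ‖₂ ≤ (1 + 1/l) ‖Wₖ‖₂`, induction on the layer gives
`‖H'ₖ - Hₖ‖_F ≤ ‖X‖_F (∏_{t<k} ‖Wₜ‖₂) (1 + 1/l)ᵏ ∑_{t<k} ‖ΔWₜ‖₂ / ‖Wₜ‖₂`.
The mean readout costs a factor `n^{-1/2}`, which cancels against `‖X‖_F ≤ √n ‖X‖₂`, and
`(1 + 1/l)ˡ ≤ e`; the factor `2` comes from the two classes of the margin. -/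

section SpectralNorm

open scoped Matrix.Norms.L2Operator

variable {m n : Type*} [Fintype m] [Fintype n] [DecidableEq n]

theorem specNorm_eq_l2_opNorm (A : Matrix m n ℝ) : specNorm A = ‖A‖ := rfl

theorem specNorm_nonneg (A : Matrix m n ℝ) : 0 ≤ specNorm A := norm_nonneg A

theorem specNorm_add_le (A B : Matrix m n ℝ) : specNorm (A + B) ≤ specNorm A + specNorm B :=
  norm_add_le A B

theorem specNorm_transpose [DecidableEq m] (A : Matrix m n ℝ) : specNorm Aᵀ = specNorm A := by
  simpa [specNorm_eq_l2_opNorm] using Matrix.l2_opNorm_conjTranspose A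

theorem sum_sq_mulVec_le (A : Matrix m n ℝ) (v : n → ℝ) :
    ∑ i, (A *ᵥ v) i ^ 2 ≤ specNorm A ^ 2 * ∑ j, v j ^ 2 := by
  have h := Matrix.l2_opNorm_mulVec A (WithLp.toLp 2 v)
  have h2 := pow_le_pow_left₀ (norm_nonneg _) h 2
  simpa [mul_pow, EuclideanSpace.real_norm_sq_eq, specNorm_eq_l2_opNorm] using h2

theorem specNorm_le_of_sum_sq_mulVec_le (A : Matrix m n ℝ) {c : ℝ} (hc : 0 ≤ c)
    (h : ∀ v : n → ℝ, ∑ i, (A *ᵥ v) i ^ 2 ≤ c ^ 2 * ∑ j, v j ^ 2) : specNorm A ≤ c := by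
  refine ContinuousLinearMap.opNorm_le_bound _ hc fun x => ?_
  refine le_of_sq_le_sq ?_ (by positivity)
  simpa [mul_pow, EuclideanSpace.real_norm_sq_eq, Matrix.toLpLin_apply] using h x

end SpectralNorm

section FrobeniusNorm

variable {m n p : Type*} [Fintype m] [Fintype n] [Fintype p]

theorem frobNorm_nonneg (A : Matrix m n ℝ) : 0 ≤ frobNorm A := Real.sqrt_nonneg _

theorem frobNorm_sq (A : Matrix m n ℝ) : frobNorm A ^ 2 = ∑ i, ∑ j, A i j ^ 2 :=
  Real.sq_sqrt (by positivity)

theorem frobNorm_le_of_sum_sq_le {A : Matrix m n ℝ} {c : ℝ} (hc : 0 ≤ c)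
    (h : ∑ i, ∑ j, A i j ^ 2 ≤ c ^ 2) : frobNorm A ≤ c :=
  Real.sqrt_le_iff.mpr ⟨hc, h⟩

theorem frobNorm_transpose (A : Matrix m n ℝ) : frobNorm Aᵀ = frobNorm A := by
  rw [frobNorm, frobNorm, Finset.sum_comm]
  rfl

theorem frobNorm_eq_norm_toLp (A : Matrix m n ℝ) :
    frobNorm A = ‖(WithLp.toLp 2 fun q : m × n => A q.1 q.2 : EuclideanSpace ℝ (m × n))‖ := by
  rw [EuclideanSpace.norm_eq, frobNorm, Fintype.sum_prod_type]
  simp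

theorem frobNorm_add_le (A B : Matrix m n ℝ) : frobNorm (A + B) ≤ frobNorm A + frobNorm B := by
  simp only [frobNorm_eq_norm_toLp, Matrix.add_apply]
  exact norm_add_le (WithLp.toLp 2 fun q : m × n => A q.1 q.2)
    (WithLp.toLp 2 fun q : m × n => B q.1 q.2)

theorem frobNorm_one [DecidableEq m] :
    frobNorm (1 : Matrix m m ℝ) = Real.sqrt (Fintype.card m) := by
  simp [frobNorm, Matrix.one_apply]

theorem frobNorm_mul_le_specNorm_mul [DecidableEq n] (A : Matrix m n ℝ) (B : Matrix n p ℝ) :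
    frobNorm (A * B) ≤ specNorm A * frobNorm B := by
  refine frobNorm_le_of_sum_sq_le (by positivity [specNorm_nonneg A, frobNorm_nonneg B]) ?_
  calc ∑ i, ∑ j, (A * B) i j ^ 2 = ∑ j, ∑ i, (A *ᵥ fun k => B k j) i ^ 2 := by
        rw [Finset.sum_comm]; rfl
    _ ≤ ∑ j, specNorm A ^ 2 * ∑ k, B k j ^ 2 :=
        Finset.sum_le_sum fun j _ => sum_sq_mulVec_le A _
    _ = (specNorm A * frobNorm B) ^ 2 := by
        rw [← Finset.mul_sum, mul_pow, frobNorm_sq, Finset.sum_comm]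

theorem frobNorm_mul_le_mul_specNorm [DecidableEq n] [DecidableEq p]
    (A : Matrix m n ℝ) (B : Matrix n p ℝ) : frobNorm (A * B) ≤ frobNorm A * specNorm B := by
  rw [← frobNorm_transpose, Matrix.transpose_mul, ← specNorm_transpose B, ← frobNorm_transpose A,
    mul_comm]
  exact frobNorm_mul_le_specNorm_mul _ _

theorem frobNorm_le_sqrt_card_mul_specNorm [DecidableEq m] [DecidableEq n] (A : Matrix m n ℝ) :
    frobNorm A ≤ Real.sqrt (Fintype.card m) * specNorm A := by
  simpa [frobNorm_one] using frobNorm_mul_le_mul_specNorm (1 : Matrix m m ℝ) A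

theorem abs_sum_col_le_sqrt_card_mul_frobNorm (A : Matrix m n ℝ) (j : n) :
    |∑ i, A i j| ≤ Real.sqrt (Fintype.card m) * frobNorm A := by
  rw [← Real.sqrt_sq_eq_abs, frobNorm, ← Real.sqrt_mul (by positivity)]
  refine Real.sqrt_le_sqrt (sq_sum_le_card_mul_sum_sq.trans ?_)
  rw [Finset.card_univ]
  gcongr with i
  exact
    Finset.single_le_sum (f := fun k => A i k ^ 2) (fun k _ => sq_nonneg _) (Finset.mem_univ j)

theorem frobNorm_relu_sub_relu_le (M N : Matrix m n ℝ) :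
    frobNorm (relu M - relu N) ≤ frobNorm (M - N) := by
  refine frobNorm_le_of_sum_sq_le (frobNorm_nonneg _) ?_
  rw [frobNorm_sq]
  refine Finset.sum_le_sum fun i _ => Finset.sum_le_sum fun j _ => ?_
  simp only [Matrix.sub_apply, relu, Matrix.map_apply]
  exact sq_le_sq.mpr (by simpa using abs_max_sub_max_le_abs (M i j) (N i j) 0)

theorem frobNorm_relu_le (M : Matrix m n ℝ) : frobNorm (relu M) ≤ frobNorm M := by
  simpa [relu] using frobNorm_relu_sub_relu_le M 0

end FrobeniusNorm

section NormalizedAdjacency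

variable {ι : Type*} [Fintype ι]

/-- Cauchy–Schwarz with the weights `a i j / dᵢ`, which sum to `1`. -/
theorem sq_mulVec_symmNormalized_le (a : Matrix ι ι ℝ) (h0 : ∀ i j, 0 ≤ a i j)
    (hd : ∀ i, 0 < ∑ k, a i k) (v : ι → ℝ) (i : ι) :
    ((Matrix.of fun i j => a i j / (√(∑ k, a i k) * √(∑ k, a j k))) *ᵥ v) i ^ 2 ≤
      ∑ j, a i j * (v j ^ 2 / ∑ k, a j k) := by
  have hdi := hd i
  calc ((Matrix.of fun i j => a i j / (√(∑ k, a i k) * √(∑ k, a j k))) *ᵥ v) i ^ 2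
      = (∑ j, a i j / (√(∑ k, a i k) * √(∑ k, a j k)) * v j) ^ 2 := rfl
    _ ≤ (∑ j, a i j / ∑ k, a i k) * ∑ j, a i j * (v j ^ 2 / ∑ k, a j k) := by
        refine Finset.sum_sq_le_sum_mul_sum_of_sq_le_mul _
          (fun j _ => div_nonneg (h0 i j) hdi.le)
          (fun j _ => mul_nonneg (h0 i j) (div_nonneg (sq_nonneg _) (hd j).le))
          fun j _ => le_of_eq ?_
        have hdj := hd j
        rw [div_mul_eq_mul_div, div_pow, mul_pow, mul_pow, Real.sq_sqrt hdi.le,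
          Real.sq_sqrt hdj.le]
        field_simp
    _ = ∑ j, a i j * (v j ^ 2 / ∑ k, a j k) := by
        rw [← Finset.sum_div, div_self hdi.ne', one_mul]

theorem specNorm_symmNormalized_le_one [DecidableEq ι] (a : Matrix ι ι ℝ) (h0 : ∀ i j, 0 ≤ a i j)
    (hsymm : a.IsSymm) (hd : ∀ i, 0 < ∑ k, a i k) :
    specNorm (Matrix.of fun i j => a i j / (√(∑ k, a i k) * √(∑ k, a j k))) ≤ 1 := by
  refine specNorm_le_of_sum_sq_mulVec_le _ zero_le_one fun v => ?_
  calc _ ≤ ∑ i, ∑ j, a i j * (v j ^ 2 / ∑ k, a j k) :=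
        Finset.sum_le_sum fun i _ => sq_mulVec_symmNormalized_le a h0 hd v i
    _ = ∑ j, (∑ i, a j i) * (v j ^ 2 / ∑ k, a j k) := by
        rw [Finset.sum_comm]
        simp_rw [← Finset.sum_mul, hsymm.apply]
    _ = 1 ^ 2 * ∑ j, v j ^ 2 := by
        rw [one_pow, one_mul]
        exact Finset.sum_congr rfl fun j _ => mul_div_cancel₀ _ (hd j).ne'

theorem specNorm_gcnLap_le_one {n : ℕ} (A : Matrix (Fin n) (Fin n) ℝ) (hsymm : A.IsSymm)
    (h0 : ∀ i j, 0 ≤ A i j) : specNorm (gcnLap A) ≤ 1 := by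
  have hA1 : ∀ i j, 0 ≤ (A + 1) i j := fun i j => add_nonneg (h0 i j) (Matrix.zero_le_one_elem i j)
  refine specNorm_symmNormalized_le_one (A + 1) hA1 (hsymm.add Matrix.isSymm_one) fun i => ?_
  calc (0 : ℝ) < (A + 1) i i := by simpa using add_pos_of_nonneg_of_pos (h0 i i) one_pos
    _ ≤ ∑ k, (A + 1) i k := Finset.single_le_sum (fun k _ => hA1 i k) (Finset.mem_univ i)

end NormalizedAdjacency

theorem frobNorm_mul_sub_mul_le {m n p : Type*} [Fintype m] [Fintype n] [Fintype p]
    [DecidableEq n] [DecidableEq p] (H H' : Matrix m n ℝ) (V V' : Matrix n p ℝ) :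
    frobNorm (H' * V' - H * V) ≤
      frobNorm (H' - H) * specNorm V' + frobNorm H * specNorm (V' - V) :=
  calc frobNorm (H' * V' - H * V) = frobNorm ((H' - H) * V' + H * (V' - V)) := by
        rw [Matrix.sub_mul, Matrix.mul_sub]; abel_nf
    _ ≤ _ := (frobNorm_add_le _ _).trans
        (add_le_add (frobNorm_mul_le_mul_specNorm _ _) (frobNorm_mul_le_mul_specNorm _ _))

section Gcn

variable {n : ℕ} {d : ℕ → ℕ} (W W' : ∀ k : ℕ, Matrix (Fin (d k)) (Fin (d (k + 1))) ℝ)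
  {P : Matrix (Fin n) (Fin n) ℝ} (X : Matrix (Fin n) (Fin (d 0)) ℝ)

theorem frobNorm_gcnRep_le (hP : specNorm P ≤ 1) (k : ℕ) :
    frobNorm (gcnRep d W P X k) ≤ frobNorm X * ∏ t ∈ Finset.range k, specNorm (W t) := by
  induction k with
  | zero => simp [gcnRep]
  | succ k ih =>
    calc frobNorm (gcnRep d W P X (k + 1)) ≤ frobNorm (P * gcnRep d W P X k * W k) :=
          frobNorm_relu_le _
      _ ≤ specNorm P * frobNorm (gcnRep d W P X k) * specNorm (W k) := by
          grw [frobNorm_mul_le_mul_specNorm, frobNorm_mul_le_specNorm_mul]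
          exact specNorm_nonneg _
      _ ≤ 1 * (frobNorm X * ∏ t ∈ Finset.range k, specNorm (W t)) * specNorm (W k) := by
          gcongr
          exacts [specNorm_nonneg _, frobNorm_nonneg _]
      _ = frobNorm X * ∏ t ∈ Finset.range (k + 1), specNorm (W t) := by
          rw [Finset.prod_range_succ]; ring

theorem frobNorm_gcnRep_succ_sub_le (hP : specNorm P ≤ 1) (k : ℕ) :
    frobNorm (gcnRep d W' P X (k + 1) - gcnRep d W P X (k + 1)) ≤
      frobNorm (gcnRep d W' P X k * W' k - gcnRep d W P X k * W k) :=
  calc _ ≤ frobNorm (P * gcnRep d W' P X k * W' k - P * gcnRep d W P X k * W k) :=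
        frobNorm_relu_sub_relu_le _ _
    _ = frobNorm (P * (gcnRep d W' P X k * W' k - gcnRep d W P X k * W k)) := by
        rw [Matrix.mul_sub, Matrix.mul_assoc, Matrix.mul_assoc]
    _ ≤ 1 * frobNorm (gcnRep d W' P X k * W' k - gcnRep d W P X k * W k) :=
        (frobNorm_mul_le_specNorm_mul _ _).trans (by gcongr; exact frobNorm_nonneg _)
    _ = _ := one_mul _

theorem abs_gcnOut_succ_sub_le (k : ℕ) (t : Fin (d (k + 1))) :
    |gcnOut d W' P X (k + 1) t - gcnOut d W P X (k + 1) t| ≤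
      (n : ℝ)⁻¹ * √n * frobNorm (gcnRep d W' P X k * W' k - gcnRep d W P X k * W k) := by
  have h := abs_sum_col_le_sqrt_card_mul_frobNorm
    (gcnRep d W' P X k * W' k - gcnRep d W P X k * W k) t
  rw [Fintype.card_fin] at h
  simp only [gcnOut, ← mul_sub, ← Finset.sum_sub_distrib, abs_mul, Matrix.sub_apply] at h ⊢
  rw [abs_of_nonneg (by positivity), mul_assoc]
  gcongr

end Gcn

section Perturbation

variable {n : ℕ} {d : ℕ → ℕ} {l : ℕ} (W ΔW : ∀ k : ℕ, Matrix (Fin (d k)) (Fin (d (k + 1))) ℝ)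
  {P : Matrix (Fin n) (Fin n) ℝ} (X : Matrix (Fin n) (Fin (d 0)) ℝ)

theorem frobNorm_gcnRep_mul_sub_le_of_sub_le (hP : specNorm P ≤ 1) {k : ℕ}
    (hΔ : specNorm (ΔW k) ≤ specNorm (W k) / l)
    (hk : frobNorm (gcnRep d (fun t => W t + ΔW t) P X k - gcnRep d W P X k) ≤
      frobNorm X * (∏ t ∈ Finset.range k, specNorm (W t)) * (1 + 1 / l) ^ k *
        ∑ t ∈ Finset.range k, specNorm (ΔW t) / specNorm (W t)) :
    frobNorm (gcnRep d (fun t => W t + ΔW t) P X k * (W k + ΔW k) - gcnRep d W P X k * W k) ≤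
      frobNorm X * (∏ t ∈ Finset.range (k + 1), specNorm (W t)) * (1 + 1 / l) ^ (k + 1) *
        ∑ t ∈ Finset.range (k + 1), specNorm (ΔW t) / specNorm (W t) := by
  set w := specNorm (W k)
  set δ := specNorm (ΔW k)
  set β := ∏ t ∈ Finset.range k, specNorm (W t)
  set S := ∑ t ∈ Finset.range k, specNorm (ΔW t) / specNorm (W t)
  set c : ℝ := 1 + 1 / l
  have hc : 1 ≤ c := le_add_of_nonneg_right (by positivity)
  have hW' : specNorm (W k + ΔW k) ≤ w * c :=
    calc specNorm (W k + ΔW k) ≤ w + w / l := (specNorm_add_le _ _).trans (by gcongr)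
      _ = w * c := by ring
  -- `δ / w` is a junk value when `w = 0`, but then `δ = 0` as well
  have hδ : δ = w * (δ / w) := (mul_div_cancel_of_imp' fun hw =>
    le_antisymm (by simpa [hw] using hΔ) (specNorm_nonneg _)).symm
  have hβ : 0 ≤ β := Finset.prod_nonneg fun t _ => specNorm_nonneg _
  calc _ ≤ frobNorm (gcnRep d (fun t => W t + ΔW t) P X k - gcnRep d W P X k) *
          specNorm (W k + ΔW k) + frobNorm (gcnRep d W P X k) * δ := by
        simpa using frobNorm_mul_sub_mul_le (gcnRep d W P X k)
          (gcnRep d (fun t => W t + ΔW t) P X k) (W k) (W k + ΔW k)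
    _ ≤ frobNorm X * β * c ^ k * S * (w * c) + frobNorm X * β * (w * (δ / w)) := by
        rw [← hδ]
        exact add_le_add (mul_le_mul hk hW' (specNorm_nonneg _) ((frobNorm_nonneg _).trans hk))
          (mul_le_mul_of_nonneg_right (frobNorm_gcnRep_le W X hP k) (specNorm_nonneg _))
    _ = frobNorm X * (β * w) * (c ^ (k + 1) * S + δ / w) := by ring
    _ ≤ frobNorm X * (β * w) * (c ^ (k + 1) * (S + δ / w)) := by
        refine mul_le_mul_of_nonneg_left ?_
          (mul_nonneg (frobNorm_nonneg _) (mul_nonneg hβ (specNorm_nonneg _)))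
        rw [mul_add]
        gcongr
        exact le_mul_of_one_le_left (div_nonneg (specNorm_nonneg _) (specNorm_nonneg _))
          (one_le_pow₀ hc)
    _ = _ := by rw [Finset.prod_range_succ, Finset.sum_range_succ]; ring

theorem frobNorm_gcnRep_sub_le (hP : specNorm P ≤ 1)
    (hΔ : ∀ k, k < l → specNorm (ΔW k) ≤ specNorm (W k) / l) :
    ∀ k ≤ l, frobNorm (gcnRep d (fun t => W t + ΔW t) P X k - gcnRep d W P X k) ≤
      frobNorm X * (∏ t ∈ Finset.range k, specNorm (W t)) * (1 + 1 / l) ^ k *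
        ∑ t ∈ Finset.range k, specNorm (ΔW t) / specNorm (W t)
  | 0, _ => by simp [gcnRep, frobNorm]
  | k + 1, hk => (frobNorm_gcnRep_succ_sub_le W _ X hP k).trans
      (frobNorm_gcnRep_mul_sub_le_of_sub_le W ΔW X hP (hΔ k hk)
        (frobNorm_gcnRep_sub_le hP hΔ k (Nat.le_of_succ_le hk)))

theorem abs_gcnOut_sub_le (hP : specNorm P ≤ 1)
    (hΔ : ∀ k, k < l → specNorm (ΔW k) ≤ specNorm (W k) / l) (t : Fin (d l)) :
    |gcnOut d (fun k => W k + ΔW k) P X l t - gcnOut d W P X l t| ≤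
      specNorm X * (∏ k ∈ Finset.range l, specNorm (W k)) * (1 + 1 / l) ^ l *
        ∑ k ∈ Finset.range l, specNorm (ΔW k) / specNorm (W k) := by
  cases l with
  | zero => simp [gcnOut]
  | succ k =>
    have hpre := frobNorm_gcnRep_mul_sub_le_of_sub_le W ΔW X hP (hΔ k k.lt_succ_self)
      (frobNorm_gcnRep_sub_le W ΔW X hP hΔ k k.le_succ)
    have hX := frobNorm_le_sqrt_card_mul_specNorm X
    rw [Fintype.card_fin] at hX
    set β := ∏ t ∈ Finset.range (k + 1), specNorm (W t)
    set c : ℝ := 1 + 1 / ↑(k + 1)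
    set S := ∑ t ∈ Finset.range (k + 1), specNorm (ΔW t) / specNorm (W t)
    have hβ : 0 ≤ β := Finset.prod_nonneg fun t _ => specNorm_nonneg _
    have hS : 0 ≤ S :=
      Finset.sum_nonneg fun t _ => div_nonneg (specNorm_nonneg _) (specNorm_nonneg _)
    have hβcS : 0 ≤ β * c ^ (k + 1) * S := by positivity
    calc _ ≤ (n : ℝ)⁻¹ * √n * frobNorm
          (gcnRep d (fun t => W t + ΔW t) P X k * (W k + ΔW k) - gcnRep d W P X k * W k) :=
          abs_gcnOut_succ_sub_le W _ X k t
      _ ≤ (n : ℝ)⁻¹ * √n * (√n * specNorm X * (β * c ^ (k + 1) * S)) := by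
          gcongr
          exact hpre.trans (by rw [mul_assoc, mul_assoc, ← mul_assoc β]; gcongr)
      _ = ((n : ℝ)⁻¹ * n) * (specNorm X * β * c ^ (k + 1) * S) := by
          linear_combination ((n : ℝ)⁻¹ * specNorm X * (β * c ^ (k + 1) * S)) *
            Real.mul_self_sqrt (Nat.cast_nonneg (α := ℝ) n)
      _ ≤ specNorm X * β * c ^ (k + 1) * S := by
          refine mul_le_of_le_one_left ?_ inv_mul_le_one
          simpa only [mul_assoc] using mul_nonneg (specNorm_nonneg X) hβcS

end Perturbation

theorem gcn_margin_pert_le_general (n l : ℕ) (d : ℕ → ℕ)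
    (W ΔW : ∀ k : ℕ, Matrix (Fin (d k)) (Fin (d (k + 1))) ℝ)
    (hΔ : ∀ k, k < l → specNorm (ΔW k) ≤ specNorm (W k) / l)
    (X : Matrix (Fin n) (Fin (d 0)) ℝ) (A : Matrix (Fin n) (Fin n) ℝ)
    (hsymm : A.IsSymm) (h01 : ∀ i j, A i j = 0 ∨ A i j = 1)
    (B : ℝ) (hX : specNorm X ≤ B) (i j : Fin (d l)) :
    |(gcnOut d (fun k => W k + ΔW k) (gcnLap A) X l i -
        gcnOut d (fun k => W k + ΔW k) (gcnLap A) X l j) -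
      (gcnOut d W (gcnLap A) X l i - gcnOut d W (gcnLap A) X l j)| ≤
      2 * Real.exp 1 * B * (∏ k ∈ Finset.range l, specNorm (W k)) *
        (∑ k ∈ Finset.range l, specNorm (ΔW k) / specNorm (W k)) := by
  have hP : specNorm (gcnLap A) ≤ 1 :=
    specNorm_gcnLap_le_one A hsymm fun i j => by rcases h01 i j with h | h <;> simp [h]
  have hi := abs_gcnOut_sub_le W ΔW X hP hΔ i
  have hj := abs_gcnOut_sub_le W ΔW X hP hΔ j
  have he : (1 + 1 / (l : ℝ)) ^ l ≤ Real.exp 1 := by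
    simpa only [one_div] using Real.one_add_inv_pow_le_exp
  have hβS : 0 ≤ (∏ k ∈ Finset.range l, specNorm (W k)) *
      ∑ k ∈ Finset.range l, specNorm (ΔW k) / specNorm (W k) :=
    mul_nonneg (Finset.prod_nonneg fun k _ => specNorm_nonneg _)
      (Finset.sum_nonneg fun k _ => div_nonneg (specNorm_nonneg _) (specNorm_nonneg _))
  have hc := mul_le_mul hX he (by positivity) ((specNorm_nonneg X).trans hX)
  calc _ ≤ |gcnOut d (fun k => W k + ΔW k) (gcnLap A) X l i - gcnOut d W (gcnLap A) X l i| +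
        |gcnOut d (fun k => W k + ΔW k) (gcnLap A) X l j - gcnOut d W (gcnLap A) X l j| :=
        (abs_sub _ _).trans_eq' (congrArg _ (by ring))
    _ ≤ _ := by linarith [mul_le_mul_of_nonneg_right hc hβS]

/-- Perturbation bound for the pairwise margin operator
`M(f_w(G), i, j) = f_w(G)_i - f_w(G)_j` of an `l`-layer GCN: if `‖ΔW_i‖₂ ≤ ‖W_i‖₂/l` for
all `i` and `‖X‖₂ ≤ B`, then
`|M(f_{w+Δw}(G),i,j) − M(f_w(G),i,j)| ≤ 2 e B (∏‖W_i‖₂) Σ ‖ΔW_i‖₂/‖W_i‖₂`. -/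
theorem gcn_margin_pert_le (n l : ℕ) (hn : 0 < n) (hl : 2 ≤ l) (d : ℕ → ℕ)
    (W ΔW : ∀ k : ℕ, Matrix (Fin (d k)) (Fin (d (k + 1))) ℝ)
    (hW : ∀ k, k < l → W k ≠ 0)
    (hΔ : ∀ k, k < l → specNorm (ΔW k) ≤ specNorm (W k) / l)
    (X : Matrix (Fin n) (Fin (d 0)) ℝ) (A : Matrix (Fin n) (Fin n) ℝ)
    (hsymm : A.IsSymm) (h01 : ∀ i j, A i j = 0 ∨ A i j = 1)
    (B : ℝ) (hX : specNorm X ≤ B) (i j : Fin (d l)) :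
    |(gcnOut d (fun k => W k + ΔW k) (gcnLap A) X l i -
        gcnOut d (fun k => W k + ΔW k) (gcnLap A) X l j) -
      (gcnOut d W (gcnLap A) X l i - gcnOut d W (gcnLap A) X l j)| ≤
      2 * Real.exp 1 * B * (∏ k ∈ Finset.range l, specNorm (W k)) *
        (∑ k ∈ Finset.range l, specNorm (ΔW k) / specNorm (W k)) :=
  gcn_margin_pert_le_general n l d W ΔW hΔ X A hsymm h01 B hX i j

end
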